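/- Let B be a nonnegative real d×d matrix all of whose rows sum to the same value b ≥ 0. If B is monotone, then trace(B) ≥ b. -/

import Mathlib

open Matrix

def IsMonotone {d : ℕ} (B : Matrix (Fin d) (Fin d) ℝ) : Prop :=
  ∀ i j : Fin d, i ≤ j → ∀ m : Fin d,
    ∑ k ∈ Finset.Ici m, B i k ≤ ∑ k ∈ Finset.Ici m, B j k

/-!
Write `T i m = ∑_{k ≥ m} B i k` for the tail sums of row `i`. Splitting off the diagonal entry,
`T m m = B m m + T m (m+1) ≤ B m m + T (m+1) (m+1)` by monotonicity, so by downward induction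
`T m m ≤ ∑_{i ≥ m} B i i`. At `m = 0` the left side is the row sum `b` and the right side is
the trace.
-/

theorem Fin.Ioi_castSucc_eq_Ici_succ {n : ℕ} (i : Fin n) :
    Finset.Ioi i.castSucc = Finset.Ici i.succ := by
  ext x
  simp [Fin.castSucc_lt_iff_succ_le]

theorem IsMonotone.sum_Ici_row_le_sum_Ici_diag {n : ℕ} {B : Matrix (Fin (n + 1)) (Fin (n + 1)) ℝ}
    (hmono : IsMonotone B) (m : Fin (n + 1)) :
    ∑ k ∈ Finset.Ici m, B m k ≤ ∑ i ∈ Finset.Ici m, B i i := by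
  induction m using Fin.reverseInduction with
  | last => simp [← Fin.top_eq_last]
  | cast i ih =>
    have hstep : ∑ k ∈ Finset.Ici i.succ, B i.castSucc k ≤ ∑ k ∈ Finset.Ici i.succ, B i.succ k :=
      hmono _ _ Fin.castSucc_lt_succ.le _
    simp only [Finset.Ici_eq_cons_Ioi, Finset.sum_cons, Fin.Ioi_castSucc_eq_Ici_succ] at ih hstep ⊢
    linarith

theorem IsMonotone.sum_row_zero_le_trace {n : ℕ} {B : Matrix (Fin (n + 1)) (Fin (n + 1)) ℝ}
    (hmono : IsMonotone B) : ∑ j, B 0 j ≤ B.trace := by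
  simpa [← bot_eq_zero, Matrix.trace] using hmono.sum_Ici_row_le_sum_Ici_diag 0

theorem stmt_9_general {d : ℕ} (hd : 1 ≤ d) (B : Matrix (Fin d) (Fin d) ℝ) (b : ℝ)
    (hrows : ∀ i, ∑ j, B i j = b)
    (hmono : IsMonotone B) :
    b ≤ Matrix.trace B := by
  obtain ⟨n, rfl⟩ : ∃ n, d = n + 1 := Nat.exists_eq_add_of_le' hd
  exact hrows 0 ▸ hmono.sum_row_zero_le_trace

/-- a nonnegative monotone matrix with all row sums equal to
`b ≥ 0` has trace at least `b`. -/
theorem stmt_9 {d : ℕ} (hd : 1 ≤ d) (B : Matrix (Fin d) (Fin d) ℝ) (b : ℝ)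
    (hb : 0 ≤ b)
    (hBnonneg : ∀ i j, 0 ≤ B i j)
    (hrows : ∀ i, ∑ j, B i j = b)
    (hmono : IsMonotone B) :
    b ≤ Matrix.trace B :=
  stmt_9_general hd B b hrows hmono
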